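/- Let G be a graph whose end ω has finite vertex-degree k, and let R be an infinite set of rays all belonging to ω. Then there is an infinite subset R' of R such that any two rays in R' intersect in infinitely many vertices. -/

import Mathlib

open SimpleGraph

variable {V : Type*}

/-- A ray in `G`: an injective sequence of vertices with consecutive vertices adjacent. -/
def IsRay (G : SimpleGraph V) (f : ℕ → V) : Prop :=
  Function.Injective f ∧ ∀ n, G.Adj (f n) (f (n + 1))

/-- A double ray in `G`: an injective two-way infinite sequence with consecutive
vertices adjacent. -/
def IsDoubleRay (G : SimpleGraph V) (f : ℤ → V) : Prop :=
  Function.Injective f ∧ ∀ n, G.Adj (f n) (f (n + 1))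

/-- The edges used by a ray. -/
def rayEdges (f : ℕ → V) : Set (Sym2 V) := {e | ∃ n, e = s(f n, f (n + 1))}

/-- The edges used by a double ray. -/
def drEdges (f : ℤ → V) : Set (Sym2 V) := {e | ∃ n : ℤ, e = s(f n, f (n + 1))}

/-- Two rays are equivalent (belong to the same end) iff no finite vertex set
separates them: for every finite `S` there are tails of both rays avoiding `S`
which are joined by a walk avoiding `S`. -/
def RayEquiv (G : SimpleGraph V) (f g : ℕ → V) : Prop :=
  ∀ S : Finset V, ∃ a b, (∀ i, a ≤ i → f i ∉ S) ∧ (∀ j, b ≤ j → g j ∉ S) ∧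
    ∃ w : G.Walk (f a) (g b), ∀ v ∈ w.support, v ∉ S

/-- The forward ray of a double ray. -/
def drFwd (f : ℤ → V) : ℕ → V := fun n => f n

/-- The backward ray of a double ray. -/
def drBwd (f : ℤ → V) : ℕ → V := fun n => f (-(n : ℤ) - 1)

/-- The end (represented by the ray `R`) has vertex-degree exactly `k`:
there are `k` pairwise vertex-disjoint rays equivalent to `R`, but not `k + 1`. -/
def EndVertexDegree (G : SimpleGraph V) (R : ℕ → V) (k : ℕ) : Prop :=
  (∃ F : Fin k → ℕ → V, (∀ i, IsRay G (F i) ∧ RayEquiv G R (F i)) ∧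
      Pairwise fun i j => Disjoint (Set.range (F i)) (Set.range (F j))) ∧
  ¬ ∃ F : Fin (k + 1) → ℕ → V, (∀ i, IsRay G (F i) ∧ RayEquiv G R (F i)) ∧
      Pairwise fun i j => Disjoint (Set.range (F i)) (Set.range (F j))

/-!
Call two rays of `ω` *close* if they meet infinitely often. If `k + 1` rays of `ω` were
pairwise not close, cutting off the finitely many common vertices would leave `k + 1`
disjoint tails, still in `ω`, contradicting the vertex-degree. So the infinite set `R`
contains no `k + 1` pairwise non-close rays, and an infinite Ramsey argument then yields
an infinite set of pairwise close rays.
-/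

open Set Function
open scoped Finset

namespace Set.Infinite

variable {α : Type*} {r : α → α → Prop} [Std.Symm r] {A : Set α}

theorem exists_infinite_pairwise_of_forall_finite_not (hA : A.Infinite)
    (h : ∀ a ∈ A, {x ∈ A | ¬ r a x}.Finite) : ∃ B ⊆ A, B.Infinite ∧ B.Pairwise r := by
  have : Std.Symm fun x y : α => x ≠ y ∧ r x y :=
    ⟨fun x y hxy => ⟨hxy.1.symm, symm_of r hxy.2⟩⟩
  obtain ⟨f, hfA, hf⟩ :=
    exists_seq_of_forall_finset_exists' (· ∈ A) (fun x y => x ≠ y ∧ r x y) fun s hs => by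
      have hbad : (↑s ∪ ⋃ x ∈ s, {y ∈ A | ¬ r x y}).Finite :=
        s.finite_toSet.union (s.finite_toSet.biUnion fun x hx => h x (hs x hx))
      obtain ⟨y, hyA, hy⟩ := (hA.sdiff hbad).nonempty
      simp only [mem_union, Finset.mem_coe, mem_iUnion, mem_ofPred_eq, not_or, not_exists,
        not_and, not_not] at hy
      exact ⟨y, hyA, fun x hx => ⟨fun hxy => hy.1 (hxy ▸ hx), hy.2 x hx hyA⟩⟩
  have hinj : Injective f := fun m n hmn => by_contra fun hne => (hf hne).1 hmn
  refine ⟨range f, range_subset_iff.2 hfA, infinite_range_of_injective hinj, ?_⟩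
  rintro _ ⟨m, rfl⟩ _ ⟨n, rfl⟩ hne
  exact (hf fun hmn => hne (congrArg f hmn)).2

/-- Infinite Ramsey theorem for two colours. -/
theorem exists_infinite_pairwise_of_card_le (k : ℕ) (hA : A.Infinite)
    (hk : ∀ s : Finset α, ↑s ⊆ A → (s : Set α).Pairwise (fun x y => ¬ r x y) → #s ≤ k) :
    ∃ B ⊆ A, B.Infinite ∧ B.Pairwise r := by
  induction k generalizing A with
  | zero =>
    obtain ⟨a, ha⟩ := hA.nonempty
    simpa using hk {a} (by simpa using ha) (by simp)
  | succ k ih =>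
    classical
    by_cases hc : ∃ a ∈ A, {x ∈ A | ¬ r a x}.Infinite
    · obtain ⟨a, haA, hC⟩ := hc
      obtain ⟨B, hBC, hB⟩ := ih (hC.sdiff (finite_singleton a)) fun s hsC hs => by
        have has : a ∉ s := fun ha => (hsC ha).2 rfl
        have hins : (insert a s : Set α).Pairwise fun x y => ¬ r x y :=
          pairwise_insert.2
            ⟨hs, fun b hb _ => ⟨(hsC hb).1.2, fun h => (hsC hb).1.2 (symm_of r h)⟩⟩
        have hsA : ↑(insert a s) ⊆ A := by
          rw [Finset.coe_insert]
          exact insert_subset haA fun b hb => (hsC hb).1.1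
        have := hk (insert a s) hsA (by simpa using hins)
        rw [Finset.card_insert_of_notMem has] at this
        omega
      exact ⟨B, fun x hx => (hBC hx).1.1, hB⟩
    · push Not at hc
      exact hA.exists_infinite_pairwise_of_forall_finite_not hc

end Set.Infinite

theorem exists_walk_along_seq {G : SimpleGraph V} {f : ℕ → V}
    (hadj : ∀ n, G.Adj (f n) (f (n + 1))) (b m : ℕ) :
    ∃ w : G.Walk (f b) (f (b + m)), ∀ v ∈ w.support, ∃ t ≥ b, f t = v := by
  induction m with
  | zero => exact ⟨.nil, by simpa using ⟨b, le_rfl, rfl⟩⟩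
  | succ m ih =>
    obtain ⟨w, hw⟩ := ih
    refine ⟨w.concat (hadj (b + m)), fun v hv => ?_⟩
    rw [Walk.support_concat, List.mem_append, List.mem_singleton] at hv
    rcases hv with hv | rfl
    · exact hw v hv
    · exact ⟨b + m + 1, by omega, rfl⟩

theorem IsRay.tail {G : SimpleGraph V} {f : ℕ → V} (hf : IsRay G f) (N : ℕ) :
    IsRay G fun n => f (n + N) :=
  ⟨fun a b h => by simpa using hf.1 h, fun n => by simpa [add_right_comm] using hf.2 (n + N)⟩

theorem RayEquiv.tail {G : SimpleGraph V} {W f : ℕ → V} (h : RayEquiv G W f)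
    (hadj : ∀ n, G.Adj (f n) (f (n + 1))) (N : ℕ) : RayEquiv G W fun n => f (n + N) := by
  intro S
  obtain ⟨a, b, hWa, hfb, w, hw⟩ := h S
  obtain ⟨w', hw'⟩ := exists_walk_along_seq hadj b N
  refine ⟨a, b, hWa, fun j hj => hfb (j + N) (by omega), w.append w', fun v hv => ?_⟩
  rcases (Walk.mem_support_append_iff _ _).1 hv with hv | hv
  · exact hw v hv
  · obtain ⟨t, hbt, rfl⟩ := hw' v hv
    exact hfb t hbt

theorem exists_pairwise_disjoint_tails {ι : Type*} [Finite ι] (g : ι → ℕ → V)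
    (hg : ∀ i, Injective (g i)) (h : Pairwise fun i j => (range (g i) ∩ range (g j)).Finite) :
    ∃ N, Pairwise fun i j =>
      Disjoint (range fun n => g i (n + N)) (range fun n => g j (n + N)) := by
  set S := ⋃ i, ⋃ j, ⋃ (_ : i ≠ j), range (g i) ∩ range (g j)
  have hS : S.Finite :=
    finite_iUnion fun i => finite_iUnion fun j => finite_iUnion fun hij => h hij
  obtain ⟨N, hN⟩ := (finite_iUnion fun i => hS.preimage (hg i).injOn).bddAbove
  refine ⟨N + 1, fun i j hij => disjoint_left.2 ?_⟩
  rintro _ ⟨n, rfl⟩ ⟨m, hm⟩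
  have hmemS : g i (n + (N + 1)) ∈ S :=
    mem_iUnion₂.2 ⟨i, j, mem_iUnion.2 ⟨hij, ⟨_, rfl⟩, ⟨_, hm⟩⟩⟩
  have := hN (mem_iUnion.2 ⟨i, hmemS⟩)
  omega

namespace EndVertexDegree

variable {G : SimpleGraph V} {W : ℕ → V} {k : ℕ}

theorem card_le {ι : Type*} [Fintype ι] (hdeg : EndVertexDegree G W k) (F : ι → ℕ → V)
    (hF : ∀ i, IsRay G (F i) ∧ RayEquiv G W (F i))
    (hdisj : Pairwise fun i j => Disjoint (range (F i)) (range (F j))) :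
    Fintype.card ι ≤ k := by
  by_contra! hlt
  obtain ⟨e⟩ : Nonempty (Fin (k + 1) ↪ ι) := Function.Embedding.nonempty_of_card_le (by simpa)
  exact hdeg.2 ⟨F ∘ e, fun i => hF (e i), fun i j hij => hdisj (e.injective.ne hij)⟩

theorem card_le_of_pairwise_finite_inter (hdeg : EndVertexDegree G W k) (s : Finset (ℕ → V))
    (hs : ∀ f ∈ s, IsRay G f ∧ RayEquiv G W f)
    (hfin : (s : Set (ℕ → V)).Pairwise fun f g => (range f ∩ range g).Finite) :
    #s ≤ k := by
  obtain ⟨N, hN⟩ := exists_pairwise_disjoint_tails (fun f : s => f.1) (fun f => (hs f f.2).1.1)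
    fun f g hfg => hfin f.2 g.2 (Subtype.coe_ne_coe.2 hfg)
  simpa using hdeg.card_le (fun f : s => fun n => f.1 (n + N))
    (fun f => ⟨(hs f f.2).1.tail N, (hs f f.2).2.tail (hs f f.2).1.2 N⟩) hN

end EndVertexDegree

theorem stmt_7_general (G : SimpleGraph V) (W : ℕ → V) (k : ℕ)
    (hdeg : EndVertexDegree G W k)
    (R : Set (ℕ → V)) (hRinf : R.Infinite)
    (hmem : ∀ f ∈ R, IsRay G f ∧ RayEquiv G W f) :
    ∃ R' ⊆ R, R'.Infinite ∧
      ∀ f ∈ R', ∀ g ∈ R', f ≠ g → (Set.range f ∩ Set.range g).Infinite := by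
  have : Std.Symm fun f g : ℕ → V => (range f ∩ range g).Infinite :=
    ⟨fun f g h => by rwa [inter_comm]⟩
  obtain ⟨B, hBR, hBinf, hB⟩ :=
    hRinf.exists_infinite_pairwise_of_card_le (r := fun f g => (range f ∩ range g).Infinite)
      k fun s hsR hs =>
        hdeg.card_le_of_pairwise_finite_inter s (fun f hf => hmem f (hsR hf))
          (hs.mono' fun _ _ => not_infinite.1)
  exact ⟨B, hBR, hBinf, fun f hf g hg => hB hf hg⟩

/-- If the end `ω` (represented by `W`) has finite vertex-degree `k` and `R` is an
infinite set of rays of `ω`, then some infinite subset of `R` has pairwise infinite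
intersection. -/
theorem stmt_7 (G : SimpleGraph V) (W : ℕ → V) (k : ℕ) (hW : IsRay G W)
    (hdeg : EndVertexDegree G W k)
    (R : Set (ℕ → V)) (hRinf : R.Infinite)
    (hmem : ∀ f ∈ R, IsRay G f ∧ RayEquiv G W f) :
    ∃ R' ⊆ R, R'.Infinite ∧
      ∀ f ∈ R', ∀ g ∈ R', f ≠ g → (Set.range f ∩ Set.range g).Infinite :=
  stmt_7_general G W k hdeg R hRinf hmem
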